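/- arXiv:0712.2408 — 2 statements merged into one kernel-verified Lean document; each statement's English description precedes it below -/
import Mathlib

section
/- Define polynomials P_k by P_0 = 1 and P_{k+1}(X) = (X + k + 1)(2X + 2k + 1)·P_k(X) - 2(X² - 1/9)·P_k(X + 1). Let φ_1 = 4/9, φ_{n+1} = (2/9)((3n+1)(3n-1))/((n+1)(2n+1))·φ_n. Then for all k ≥ 0 and n ≥ 1, (-1)^k (Δ^k φ)_n = φ_n · P_k(n) / ((n+1)(n+2)···(n+k) · (2n+1)(2n+3)···(2n+2k-1)), where Δ is the forward difference operator. -/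
/-- The coefficient sequence: `φ_1 = 4/9`,
`φ_{n+1} = (2/9)·((3n+1)(3n-1))/((n+1)(2n+1))·φ_n` for `n ≥ 1` (and `φ_0 = 0`). -/
noncomputable def phiSeq : ℕ → ℝ
  | 0 => 0
  | 1 => 4 / 9
  | (n + 2) =>
      (2 / 9) * ((3 * ((n : ℝ) + 1) + 1) * (3 * ((n : ℝ) + 1) - 1))
        / ((((n : ℝ) + 1) + 1) * (2 * ((n : ℝ) + 1) + 1)) * phiSeq (n + 1)

/-- Forward difference operator `(Δ f)_n = f_{n+1} - f_n`. -/
def fdiff (f : ℕ → ℝ) : ℕ → ℝ := fun n => f (n + 1) - f n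

/-- `P_0 = 1`, `P_{k+1}(X) = (X+k+1)(2X+2k+1)·P_k(X) - 2(X² - 1/9)·P_k(X+1)`. -/
noncomputable def P : ℕ → Polynomial ℝ
  | 0 => 1
  | (k + 1) =>
      (Polynomial.X + Polynomial.C ((k : ℝ) + 1))
          * (2 * Polynomial.X + Polynomial.C (2 * (k : ℝ) + 1)) * P k
        - 2 * (Polynomial.X ^ 2 - Polynomial.C (1 / 9)) * (P k).comp (Polynomial.X + 1)

/-!
Write `ψ_k(n)` (`fdiffClosedForm k n`) for the right-hand side and `D_k(n)` (`fdiffDenom k n`)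
for its denominator. As `ψ_0 = φ`, it suffices that `ψ_{k+1}(n) = ψ_k(n) - ψ_k(n+1)`. Now
`D_{k+1}(n)` is both `D_k(n)·(n+k+1)(2n+2k+1)` and `(n+1)(2n+1)·D_k(n+1)`, while
`φ_{n+1}·(n+1)(2n+1) = 2(n² - 1/9)·φ_n`; so over the common denominator `D_{k+1}(n)` the
difference `ψ_k(n) - ψ_k(n+1)` has numerator `φ_n` times the recurrence defining `P_{k+1}(n)`.
-/

theorem neg_one_pow_mul_fdiff_iterate {f : ℕ → ℝ} {g : ℕ → ℕ → ℝ} {m : ℕ}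
    (h_zero : ∀ n, m ≤ n → g 0 n = f n)
    (h_succ : ∀ k n, m ≤ n → g (k + 1) n = g k n - g k (n + 1)) (k : ℕ) :
    ∀ n, m ≤ n → (-1 : ℝ) ^ k * (fdiff^[k] f) n = g k n := by
  induction k with
  | zero => simpa using fun n hn => (h_zero n hn).symm
  | succ k ih =>
    intro n hn
    rw [Function.iterate_succ_apply', fdiff, h_succ k n hn, ← ih n hn, ← ih (n + 1) (by omega)]
    ring

theorem phiSeq_succ_mul {n : ℕ} (hn : 1 ≤ n) :
    phiSeq (n + 1) * (((n : ℝ) + 1) * (2 * n + 1)) = 2 * ((n : ℝ) ^ 2 - 1 / 9) * phiSeq n := by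
  obtain ⟨m, rfl⟩ := Nat.exists_eq_add_of_le' hn
  rw [phiSeq]
  push_cast
  field_simp
  ring

theorem P_succ_eval (k : ℕ) (x : ℝ) :
    (P (k + 1)).eval x =
      (x + k + 1) * (2 * x + 2 * k + 1) * (P k).eval x
        - 2 * (x ^ 2 - 1 / 9) * (P k).eval (x + 1) := by
  simp only [P, Polynomial.eval_sub, Polynomial.eval_mul, Polynomial.eval_add, Polynomial.eval_pow,
    Polynomial.eval_ofNat, Polynomial.eval_X, Polynomial.eval_C, Polynomial.eval_comp,
    Polynomial.eval_one]
  ring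

noncomputable def fdiffDenom (k : ℕ) (x : ℝ) : ℝ :=
  (∏ j ∈ Finset.range k, (x + j + 1)) * ∏ j ∈ Finset.range k, (2 * x + 2 * j + 1)

theorem fdiffDenom_pos (k : ℕ) {x : ℝ} (hx : 0 ≤ x) : 0 < fdiffDenom k x := by
  unfold fdiffDenom
  positivity

theorem fdiffDenom_succ (k : ℕ) (x : ℝ) :
    fdiffDenom (k + 1) x = fdiffDenom k x * ((x + k + 1) * (2 * x + 2 * k + 1)) := by
  simp only [fdiffDenom, Finset.prod_range_succ]
  ring

theorem fdiffDenom_succ' (k : ℕ) (x : ℝ) :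
    fdiffDenom (k + 1) x = (x + 1) * (2 * x + 1) * fdiffDenom k (x + 1) := by
  simp only [fdiffDenom, Finset.prod_range_succ']
  push_cast
  ring_nf

noncomputable def fdiffClosedForm (k n : ℕ) : ℝ :=
  phiSeq n * (P k).eval (n : ℝ) / fdiffDenom k n

theorem fdiffClosedForm_succ (k : ℕ) {n : ℕ} (hn : 1 ≤ n) :
    fdiffClosedForm (k + 1) n = fdiffClosedForm k n - fdiffClosedForm k (n + 1) := by
  have hpos := fdiffDenom_pos k (Nat.cast_nonneg n)
  have hpos' := fdiffDenom_pos k (Nat.cast_nonneg (n + 1))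
  have hshift : fdiffClosedForm k (n + 1) = phiSeq n * (2 * ((n : ℝ) ^ 2 - 1 / 9)
      * (P k).eval ((n : ℝ) + 1)) / fdiffDenom (k + 1) n := by
    rw [fdiffClosedForm, div_eq_div_iff hpos'.ne' (fdiffDenom_pos _ n.cast_nonneg).ne',
      fdiffDenom_succ', Nat.cast_add_one]
    linear_combination (P k).eval ((n : ℝ) + 1) * fdiffDenom k (n + 1) * phiSeq_succ_mul hn
  rw [hshift, fdiffClosedForm, fdiffClosedForm, P_succ_eval, fdiffDenom_succ]
  field_simp

theorem stmt_12 (k n : ℕ) (hn : 1 ≤ n) :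
    (-1 : ℝ) ^ k * (fdiff^[k] phiSeq) n =
      phiSeq n * (P k).eval (n : ℝ) /
        ((∏ j ∈ Finset.range k, ((n : ℝ) + (j : ℝ) + 1)) *
          (∏ j ∈ Finset.range k, (2 * (n : ℝ) + 2 * (j : ℝ) + 1))) :=
  neg_one_pow_mul_fdiff_iterate (g := fdiffClosedForm) (m := 1)
    (fun n _ => by simp [fdiffClosedForm, fdiffDenom, P])
    (fun k _ hn => fdiffClosedForm_succ k hn) k n hn
end

section
/- Let φ_1 = 4/9 and φ_{n+1} = (2/9)·((3n+1)(3n-1))/((n+1)(2n+1))·φ_n for n ≥ 1. Then Σ_{n≥1} φ_n = 1, i.e., the power series for φ(u) = 4·sin²((1/3)·arcsin(√u)) converges at u = 1 with sum φ(1) = 1. -/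
/-!
Put `F(x) = ∑ φₙ xⁿ`. The recursion for `φₙ` is exactly the statement that `F` solves
`2x(1-x)F'' + (1-2x)F' + (2/9)F = 4/9` on `|x| < 1`. In the variable `x = sin² θ` this becomes
`g'' = -(4/9) g` for `g(θ) = 1 - F(sin² θ)/2`, with `g(0) = 1`, `g'(0) = 0`; hence
`g(θ) = cos(2θ/3)` and `F(x) = 2 - 2 cos((2/3) arcsin √x) = 4 sin²((1/3) arcsin √x)`.
The coefficients are nonnegative, so `∑ φₙ` is the limit of `F(x)` as `x → 1⁻`, namely
`4 sin²(π/6) = 1`.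
-/

open Real Set Filter Topology

section PowerSeries

variable {a : ℕ → ℝ} {C : ℝ}

/-- For `n < k` the truncated exponent `n - k` is harmless: `n.descFactorial k = 0`. -/
noncomputable def powerSeriesDeriv (a : ℕ → ℝ) (k : ℕ) (x : ℝ) : ℝ :=
  ∑' n, a n * n.descFactorial k * x ^ (n - k)

lemma powerSeriesDeriv_zero (a : ℕ → ℝ) (x : ℝ) :
    powerSeriesDeriv a 0 x = ∑' n, a n * x ^ n := by
  simp [powerSeriesDeriv]

lemma powerSeriesDeriv_zero_apply_zero (a : ℕ → ℝ) : powerSeriesDeriv a 0 0 = a 0 := by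
  rw [powerSeriesDeriv_zero, tsum_eq_single 0 fun n hn => by simp [hn]]
  simp

lemma abs_mul_descFactorial_mul_pow_le (ha : ∀ n, |a n| ≤ C) {r y : ℝ} (hr₀ : 0 < r)
    (hr₁ : r ≤ 1) (hy : |y| ≤ r) (k n : ℕ) :
    |a n * n.descFactorial k * y ^ (n - k)| ≤ C / r ^ k * ((n : ℝ) ^ k * r ^ n) := by
  have hC : 0 ≤ C := (abs_nonneg _).trans (ha 0)
  have hpow : r ^ (n - k) * r ^ k ≤ r ^ n := by
    rw [← pow_add]
    exact pow_le_pow_of_le_one hr₀.le hr₁ (by omega)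
  have hdesc : (n.descFactorial k : ℝ) ≤ (n : ℝ) ^ k := by
    exact_mod_cast Nat.descFactorial_le_pow n k
  rw [abs_mul, abs_mul, abs_pow, Nat.abs_cast, div_mul_eq_mul_div, le_div_iff₀ (by positivity)]
  calc |a n| * n.descFactorial k * |y| ^ (n - k) * r ^ k
      ≤ C * n ^ k * (r ^ (n - k) * r ^ k) := by
        rw [mul_assoc _ (|y| ^ (n - k))]
        gcongr
        exact ha n
    _ ≤ C * (n ^ k * r ^ n) := by
        rw [mul_assoc]
        gcongr

lemma summable_const_mul_pow_mul_geometric {r : ℝ} (hr₀ : 0 < r) (hr₁ : r < 1) (c : ℝ)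
    (k : ℕ) : Summable fun n : ℕ => c * ((n : ℝ) ^ k * r ^ n) :=
  (summable_pow_mul_geometric_of_norm_lt_one (R := ℝ) k
    (by rwa [Real.norm_of_nonneg hr₀.le])).mul_left c

lemma summable_mul_descFactorial_mul_pow (ha : ∀ n, |a n| ≤ C) {x : ℝ} (hx : |x| < 1)
    (k : ℕ) : Summable fun n => a n * n.descFactorial k * x ^ (n - k) := by
  have hr₀ : 0 < (|x| + 1) / 2 := by positivity
  refine .of_norm_bounded
    (summable_const_mul_pow_mul_geometric hr₀ (by linarith) (C / ((|x| + 1) / 2) ^ k) k)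
    fun n => ?_
  rw [Real.norm_eq_abs]
  exact abs_mul_descFactorial_mul_pow_le ha hr₀ (by linarith) (by linarith) k n

lemma hasDerivAt_powerSeriesDeriv (ha : ∀ n, |a n| ≤ C) {x : ℝ} (hx : |x| < 1) (k : ℕ) :
    HasDerivAt (powerSeriesDeriv a k) (powerSeriesDeriv a (k + 1) x) x := by
  set r := (|x| + 1) / 2 with hr
  have hr₀ : 0 < r := by positivity
  have hxr : x ∈ Ioo (-r) r := by
    constructor <;> linarith [neg_abs_le x, le_abs_self x]
  have hterm : ∀ n y, HasDerivAt (fun z => a n * n.descFactorial k * z ^ (n - k))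
      (a n * n.descFactorial (k + 1) * y ^ (n - (k + 1))) y := by
    intro n y
    refine ((hasDerivAt_pow (n - k) y).const_mul (a n * n.descFactorial k)).congr_deriv ?_
    rw [Nat.descFactorial_succ, Nat.cast_mul, ← Nat.sub_sub]
    ring
  refine hasDerivAt_tsum_of_isPreconnected
    (summable_const_mul_pow_mul_geometric hr₀ (by linarith) (C / r ^ (k + 1)) (k + 1))
    isOpen_Ioo isPreconnected_Ioo (fun n y _ => hterm n y) (fun n y hy => ?_) hxr
    (summable_mul_descFactorial_mul_pow ha hx k) hxr
  rw [Real.norm_eq_abs]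
  exact abs_mul_descFactorial_mul_pow_le ha hr₀ (by linarith) (abs_le.2 ⟨hy.1.le, hy.2.le⟩)
    (k + 1) n

end PowerSeries

lemma eqOn_zero_of_hasDerivAt_of_hasDerivAt_neg_sq_mul {s : Set ℝ} (hs : IsOpen s)
    (hs' : IsPreconnected s) {u u' : ℝ → ℝ} {ω t₀ : ℝ} (hω : ω ≠ 0)
    (hu : ∀ t ∈ s, HasDerivAt u (u' t) t) (hu' : ∀ t ∈ s, HasDerivAt u' (-(ω ^ 2 * u t)) t)
    (ht₀ : t₀ ∈ s) (h₀ : u t₀ = 0) (h₀' : u' t₀ = 0) : EqOn u 0 s := by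
  set E : ℝ → ℝ := fun t => ω ^ 2 * u t ^ 2 + u' t ^ 2
  have hE : ∀ t ∈ s, HasDerivAt E 0 t := fun t ht => by
    refine ((((hu t ht).pow 2).const_mul (ω ^ 2)).add ((hu' t ht).pow 2)).congr_deriv ?_
    ring
  have hconst : ∀ t ∈ s, E t = E t₀ := fun t ht =>
    hs.is_const_of_deriv_eq_zero hs'
      (fun t ht => (hE t ht).differentiableAt.differentiableWithinAt)
      (fun t ht => (hE t ht).deriv) ht ht₀
  intro t ht
  have hEt : ω ^ 2 * u t ^ 2 + u' t ^ 2 = 0 := by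
    simpa [E, h₀, h₀'] using hconst t ht
  have := (add_eq_zero_iff_of_nonneg (by positivity) (sq_nonneg _)).1 hEt
  simpa [hω] using this.1

lemma hasSum_of_nonneg_of_tendsto_powerSeries {a : ℕ → ℝ} {f : ℝ → ℝ} {L : ℝ}
    (ha : ∀ n, 0 ≤ a n) (hf : ∀ x ∈ Ioo (0 : ℝ) 1, HasSum (fun n => a n * x ^ n) (f x))
    (hL : Tendsto f (𝓝[<] 1) (𝓝 L)) : HasSum a L := by
  have hmem : ∀ᶠ x in 𝓝[<] (1 : ℝ), x ∈ Ioo 0 1 := Ioo_mem_nhdsLT zero_lt_one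
  have hpartial : ∀ N, ∑ i ∈ Finset.range N, a i ≤ L := by
    intro N
    have hpoly : Tendsto (fun x : ℝ => ∑ i ∈ Finset.range N, a i * x ^ i) (𝓝[<] 1)
        (𝓝 (∑ i ∈ Finset.range N, a i)) := by
      have : Continuous fun x : ℝ => ∑ i ∈ Finset.range N, a i * x ^ i := by fun_prop
      simpa using (this.tendsto 1).mono_left nhdsWithin_le_nhds
    refine le_of_tendsto_of_tendsto hpoly hL (hmem.mono fun x hx => ?_)
    exact sum_le_hasSum _ (fun i _ => mul_nonneg (ha i) (pow_nonneg hx.1.le i)) (hf x hx)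
  have hsum : Summable a := summable_of_sum_range_le ha hpartial
  have hle : ∑' n, a n ≤ L := Real.tsum_le_of_sum_range_le ha hpartial
  have hge : L ≤ ∑' n, a n := by
    refine le_of_tendsto hL (hmem.mono fun x hx => ?_)
    refine hasSum_le (fun n => ?_) (hf x hx) hsum.hasSum
    exact mul_le_of_le_one_right (ha n) (pow_le_one₀ hx.1.le hx.2.le)
  exact le_antisymm hle hge ▸ hsum.hasSum

lemma phiSeq_add_two (n : ℕ) : phiSeq (n + 2) =
    2 * (9 * ((n : ℝ) + 1) ^ 2 - 1) / (9 * ((n + 2) * (2 * n + 3))) * phiSeq (n + 1) := by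
  rw [phiSeq]
  congr 1
  field_simp
  ring

lemma phiSeq_mem_Icc (n : ℕ) : phiSeq n ∈ Icc 0 (4 / 9) := by
  induction n using Nat.strong_induction_on with
  | _ n ih =>
    match n with
    | 0 => norm_num [phiSeq]
    | 1 => norm_num [phiSeq]
    | n + 2 =>
      obtain ⟨h₀, h₁⟩ := ih (n + 1) (by omega)
      have hn : (0 : ℝ) ≤ n := n.cast_nonneg
      have hden : (0 : ℝ) < 9 * ((n + 2) * (2 * n + 3)) := by positivity
      rw [phiSeq_add_two]
      refine ⟨mul_nonneg (div_nonneg ?_ hden.le) h₀,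
        (mul_le_of_le_one_left h₀ ((div_le_one hden).2 ?_)).trans h₁⟩ <;> nlinarith

lemma abs_phiSeq_le (n : ℕ) : |phiSeq n| ≤ 4 / 9 :=
  abs_le.2 ⟨by linarith [(phiSeq_mem_Icc n).1], (phiSeq_mem_Icc n).2⟩

lemma mul_phiSeq_succ {n : ℕ} (hn : n ≠ 0) :
    ((n : ℝ) + 1) * (2 * n + 1) * phiSeq (n + 1) = (2 * n ^ 2 - 2 / 9) * phiSeq n := by
  obtain ⟨m, rfl⟩ := Nat.exists_eq_succ_of_ne_zero hn
  rw [phiSeq_add_two]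
  push_cast
  field_simp
  ring

lemma phiSeq_ode {x : ℝ} (hx : |x| < 1) :
    2 * x * (1 - x) * powerSeriesDeriv phiSeq 2 x + (1 - 2 * x) * powerSeriesDeriv phiSeq 1 x
      + 2 / 9 * powerSeriesDeriv phiSeq 0 x = 4 / 9 := by
  have h k := (summable_mul_descFactorial_mul_pow abs_phiSeq_le hx k).hasSum
  have hA : HasSum (fun n => phiSeq (n + 1) * ((n + 1) * (2 * n + 1)) * x ^ n)
      (powerSeriesDeriv phiSeq 1 x + 2 * x * powerSeriesDeriv phiSeq 2 x) := by
    have := (hasSum_nat_add_iff' 1).2 ((h 1).add ((h 2).mul_left (2 * x)))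
    simp only [Finset.sum_range_one, Nat.zero_descFactorial_succ, Nat.cast_zero, mul_zero,
      zero_mul, add_zero, sub_zero] at this
    refine this.congr_fun fun n => ?_
    rcases n with _ | n
    · simp
    · simp [Nat.descFactorial]
      ring
  have hB : HasSum (fun n => phiSeq n * (2 * n ^ 2 - 2 / 9) * x ^ n)
      (2 * x * powerSeriesDeriv phiSeq 1 x + 2 * x ^ 2 * powerSeriesDeriv phiSeq 2 x
        - 2 / 9 * powerSeriesDeriv phiSeq 0 x) := by
    refine ((((h 1).mul_left (2 * x)).add ((h 2).mul_left (2 * x ^ 2))).sub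
      ((h 0).mul_left (2 / 9))).congr_fun fun n => ?_
    rcases n with _ | _ | n
    · simp
      ring
    · simp
      ring
    · simp [Nat.descFactorial]
      ring
  have hAB := hA.sub hB
  have hsingle : HasSum (fun n => phiSeq (n + 1) * ((n + 1) * (2 * n + 1)) * x ^ n
      - phiSeq n * (2 * n ^ 2 - 2 / 9) * x ^ n) (4 / 9) := by
    have hterm : ∀ n ≠ 0, phiSeq (n + 1) * ((n + 1) * (2 * n + 1)) * x ^ n
        - phiSeq n * (2 * n ^ 2 - 2 / 9) * x ^ n = 0 := by
      intro n hn
      linear_combination x ^ n * mul_phiSeq_succ hn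
    simpa [phiSeq] using hasSum_single 0 hterm
  linear_combination hAB.unique hsingle

lemma abs_sin_sq_lt_one {θ : ℝ} (hθ : θ ∈ Ioo (-(π / 2)) (π / 2)) : |sin θ ^ 2| < 1 := by
  have := cos_pos_of_mem_Ioo hθ
  rw [abs_of_nonneg (sq_nonneg _)]
  nlinarith [sin_sq_add_cos_sq θ]

lemma one_sub_half_powerSeriesDeriv_phiSeq_sin_sq {θ : ℝ}
    (hθ : θ ∈ Ioo (-(π / 2)) (π / 2)) :
    1 - powerSeriesDeriv phiSeq 0 (sin θ ^ 2) / 2 = cos (2 / 3 * θ) := by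
  set F := powerSeriesDeriv phiSeq with hFdef
  have hF : ∀ k, ∀ θ ∈ Ioo (-(π / 2)) (π / 2),
      HasDerivAt (fun t => F k (sin t ^ 2))
        (F (k + 1) (sin θ ^ 2) * (2 * sin θ * cos θ)) θ := by
    intro k θ hθ
    have hsin : HasDerivAt (fun t => sin t ^ 2) (2 * sin θ * cos θ) θ :=
      ((hasDerivAt_sin θ).pow 2).congr_deriv (by ring)
    exact (hasDerivAt_powerSeriesDeriv abs_phiSeq_le (abs_sin_sq_lt_one hθ) k).comp θ hsin
  have hu : ∀ θ ∈ Ioo (-(π / 2)) (π / 2),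
      HasDerivAt (fun t => 1 - F 0 (sin t ^ 2) / 2 - cos (2 / 3 * t))
        (-(F 1 (sin θ ^ 2) * sin θ * cos θ) + 2 / 3 * sin (2 / 3 * θ)) θ := by
    intro θ hθ
    have hcos : HasDerivAt (fun t => cos (2 / 3 * t)) (-sin (2 / 3 * θ) * (2 / 3)) θ :=
      (hasDerivAt_cos _).comp θ ((hasDerivAt_id θ).const_mul _ |>.congr_deriv (mul_one _))
    exact (((hF 0 θ hθ).div_const 2).const_sub 1 |>.sub hcos).congr_deriv (by ring)
  have hu' : ∀ θ ∈ Ioo (-(π / 2)) (π / 2),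
      HasDerivAt (fun t => -(F 1 (sin t ^ 2) * sin t * cos t) + 2 / 3 * sin (2 / 3 * t))
        (-((2 / 3) ^ 2 * (1 - F 0 (sin θ ^ 2) / 2 - cos (2 / 3 * θ)))) θ := by
    intro θ hθ
    have hode := phiSeq_ode (abs_sin_sq_lt_one hθ)
    rw [← hFdef] at hode
    have hsin : HasDerivAt (fun t => sin (2 / 3 * t)) (cos (2 / 3 * θ) * (2 / 3)) θ :=
      (hasDerivAt_sin _).comp θ ((hasDerivAt_id θ).const_mul _ |>.congr_deriv (mul_one _))
    refine ((((hF 1 θ hθ).mul (hasDerivAt_sin θ)).mul (hasDerivAt_cos θ)).neg.add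
      (hsin.const_mul _)).congr_deriv ?_
    simp only [Pi.mul_apply, Nat.reduceAdd]
    linear_combination
      -hode - (2 * sin θ ^ 2 * F 2 (sin θ ^ 2) + F 1 (sin θ ^ 2)) * sin_sq_add_cos_sq θ
  have := eqOn_zero_of_hasDerivAt_of_hasDerivAt_neg_sq_mul isOpen_Ioo isPreconnected_Ioo
    (by norm_num) hu hu'
    (show (0 : ℝ) ∈ Ioo (-(π / 2)) (π / 2) by constructor <;> linarith [pi_pos])
    (by simp [F, powerSeriesDeriv_zero_apply_zero, phiSeq]) (by simp) hθ
  simp only [Pi.zero_apply] at this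
  linarith

lemma hasSum_phiSeq_mul_pow {x : ℝ} (hx : x ∈ Ioo (0 : ℝ) 1) :
    HasSum (fun n => phiSeq n * x ^ n) (4 * sin ((1 / 3) * arcsin (sqrt x)) ^ 2) := by
  have hsqrt : sqrt x < 1 := (sqrt_lt' one_pos).2 (by linarith [hx.2])
  set θ := arcsin (sqrt x)
  have hθ : θ ∈ Ioo (-(π / 2)) (π / 2) :=
    ⟨neg_pi_div_two_lt_arcsin.2 (by linarith [sqrt_nonneg x]), arcsin_lt_pi_div_two.2 hsqrt⟩
  have hsin : sin θ ^ 2 = x := by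
    rw [sin_arcsin (by linarith [sqrt_nonneg x]) hsqrt.le, sq_sqrt hx.1.le]
  have hF := one_sub_half_powerSeriesDeriv_phiSeq_sin_sq hθ
  rw [hsin, powerSeriesDeriv_zero] at hF
  have hcos : cos (2 / 3 * θ) = 1 - 2 * sin ((1 / 3) * θ) ^ 2 := by
    rw [show 2 / 3 * θ = 2 * (1 / 3 * θ) by ring, cos_two_mul]
    linarith [sin_sq_add_cos_sq (1 / 3 * θ)]
  have hsum := (summable_mul_descFactorial_mul_pow abs_phiSeq_le
    (by rw [abs_of_pos hx.1]; exact hx.2) 0).hasSum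
  simp only [Nat.descFactorial_zero, Nat.cast_one, mul_one, Nat.sub_zero] at hsum
  convert hsum using 1
  linarith

lemma four_mul_sin_sq_third_arcsin_sqrt_one : 4 * sin ((1 / 3) * arcsin (sqrt 1)) ^ 2 = 1 := by
  rw [sqrt_one, arcsin_one, show 1 / 3 * (π / 2) = π / 6 by ring, sin_pi_div_six]
  norm_num

theorem stmt_13 :
    HasSum phiSeq 1 ∧ 4 * Real.sin ((1 / 3) * Real.arcsin (Real.sqrt 1)) ^ 2 = 1 := by
  refine ⟨hasSum_of_nonneg_of_tendsto_powerSeries (fun n => (phiSeq_mem_Icc n).1)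
    (fun x hx => hasSum_phiSeq_mul_pow hx) ?_, four_mul_sin_sq_third_arcsin_sqrt_one⟩
  have hcont : Continuous fun x => 4 * sin ((1 / 3) * arcsin (sqrt x)) ^ 2 := by fun_prop
  have := (hcont.tendsto 1).mono_left (nhdsWithin_le_nhds (s := Iio 1))
  rwa [four_mul_sin_sq_third_arcsin_sqrt_one] at this
end
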